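/- Let n ≥ 1 and let (H₁,F₁,N₁) and (H₂,F₂,N₂) be two triples of real matrices of sizes 1×n, n×n and n×1 respectively, each minimal, i.e. for i = 1,2 the n×n observability matrix with rows H_i F_i^j (0 ≤ j ≤ n−1) and the n×n controllability matrix with columns F_i^j N_i (0 ≤ j ≤ n−1) are invertible. Then H₁ F₁^{k−1} N₁ = H₂ F₂^{k−1} N₂ for all k ≥ 1 if and only if there exists an invertible real n×n matrix T such that F₂ = T F₁ T⁻¹, N₂ = T N₁ and H₂ = H₁ T⁻¹. -/
import Mathlib


open Matrix

private lemma omc {n : ℕ} (H : Matrix (Fin 1) (Fin n) ℝ)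
    (F M : Matrix (Fin n) (Fin n) ℝ) (N : Matrix (Fin n) (Fin 1) ℝ) (i j : Fin n) :
    ((Matrix.of fun i j : Fin n => (H * F ^ (i : ℕ)) 0 j) * M *
      (Matrix.of fun i j : Fin n => (F ^ (j : ℕ) * N) i 0)) i j =
      (H * F ^ (i : ℕ) * M * (F ^ (j : ℕ) * N)) 0 0 := by
  simp only [Matrix.mul_apply, Matrix.of_apply, Finset.sum_mul, Finset.mul_sum]

/-- Two minimal realizations of the same sequence are
isomorphic: `H₁ F₁^(k-1) N₁ = H₂ F₂^(k-1) N₂` for all `k ≥ 1` iff there is an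
invertible `T` with `F₂ = T F₁ T⁻¹`, `N₂ = T N₁`, `H₂ = H₁ T⁻¹`. -/
theorem stmt_4 {n : ℕ} (hn : 1 ≤ n)
    (H₁ H₂ : Matrix (Fin 1) (Fin n) ℝ) (F₁ F₂ : Matrix (Fin n) (Fin n) ℝ)
    (N₁ N₂ : Matrix (Fin n) (Fin 1) ℝ)
    (hobs₁ : IsUnit (Matrix.of fun i j : Fin n => (H₁ * F₁ ^ (i : ℕ)) 0 j))
    (hctr₁ : IsUnit (Matrix.of fun i j : Fin n => (F₁ ^ (j : ℕ) * N₁) i 0))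
    (hobs₂ : IsUnit (Matrix.of fun i j : Fin n => (H₂ * F₂ ^ (i : ℕ)) 0 j))
    (hctr₂ : IsUnit (Matrix.of fun i j : Fin n => (F₂ ^ (j : ℕ) * N₂) i 0)) :
    (∀ k : ℕ, 1 ≤ k →
        (H₁ * F₁ ^ (k - 1) * N₁) 0 0 = (H₂ * F₂ ^ (k - 1) * N₂) 0 0) ↔
      ∃ T : Matrix (Fin n) (Fin n) ℝ, IsUnit T ∧
        F₂ = T * F₁ * T⁻¹ ∧ N₂ = T * N₁ ∧ H₂ = H₁ * T⁻¹ := by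
  set O₁ : Matrix (Fin n) (Fin n) ℝ :=
    Matrix.of fun i j : Fin n => (H₁ * F₁ ^ (i : ℕ)) 0 j with hO₁def
  set O₂ : Matrix (Fin n) (Fin n) ℝ :=
    Matrix.of fun i j : Fin n => (H₂ * F₂ ^ (i : ℕ)) 0 j with hO₂def
  set C₁ : Matrix (Fin n) (Fin n) ℝ :=
    Matrix.of fun i j : Fin n => (F₁ ^ (j : ℕ) * N₁) i 0 with hC₁def
  set C₂ : Matrix (Fin n) (Fin n) ℝ :=
    Matrix.of fun i j : Fin n => (F₂ ^ (j : ℕ) * N₂) i 0 with hC₂def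
  have hO₂d : IsUnit O₂.det := (Matrix.isUnit_iff_isUnit_det _).mp hobs₂
  have hC₂d : IsUnit C₂.det := (Matrix.isUnit_iff_isUnit_det _).mp hctr₂
  constructor
  · intro hr
    have key : ∀ a b : ℕ, (H₁ * F₁ ^ a * (F₁ ^ b * N₁)) 0 0
        = (H₂ * F₂ ^ a * (F₂ ^ b * N₂)) 0 0 := by
      intro a b
      have h := hr (a + b + 1) (by omega)
      simpa only [Nat.add_sub_cancel, pow_add, Matrix.mul_assoc] using h
    have keyF : ∀ a b : ℕ, (H₁ * F₁ ^ a * F₁ * (F₁ ^ b * N₁)) 0 0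
        = (H₂ * F₂ ^ a * F₂ * (F₂ ^ b * N₂)) 0 0 := by
      intro a b
      have h := key (a + 1) b
      simpa only [pow_succ, Matrix.mul_assoc] using h
    have hOC : O₁ * C₁ = O₂ * C₂ := by
      ext i j
      have h1 := omc H₁ F₁ 1 N₁ i j
      have h2 := omc H₂ F₂ 1 N₂ i j
      simp only [Matrix.mul_one] at h1 h2
      rw [h1, h2, key]
    have hOFC : O₁ * F₁ * C₁ = O₂ * F₂ * C₂ := by
      ext i j
      rw [omc H₁ F₁ F₁ N₁ i j, omc H₂ F₂ F₂ N₂ i j, keyF]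
    set T : Matrix (Fin n) (Fin n) ℝ := O₂⁻¹ * O₁ with hTdef
    have hO₂inv : O₂ * O₂⁻¹ = 1 := Matrix.mul_nonsing_inv _ hO₂d
    have hO₂inv' : O₂⁻¹ * O₂ = 1 := Matrix.nonsing_inv_mul _ hO₂d
    have hC₂inv : C₂ * C₂⁻¹ = 1 := Matrix.mul_nonsing_inv _ hC₂d
    have hO₂T : O₂ * T = O₁ := by
      rw [hTdef, ← mul_assoc, hO₂inv, one_mul]
    have hTC : T * C₁ = C₂ := by
      rw [hTdef, mul_assoc, hOC, ← mul_assoc, hO₂inv', one_mul]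
    have hTunit : IsUnit T :=
      ((Matrix.isUnit_nonsing_inv_iff).mpr hobs₂).mul hobs₁
    have hTd : IsUnit T.det := (Matrix.isUnit_iff_isUnit_det _).mp hTunit
    have hTinv : T⁻¹ = C₁ * C₂⁻¹ := by
      apply Matrix.inv_eq_right_inv
      rw [← mul_assoc, hTC, hC₂inv]
    have hTinvT : T * T⁻¹ = 1 := Matrix.mul_nonsing_inv _ hTd
    refine ⟨T, hTunit, ?_, ?_, ?_⟩
    · -- F₂ = T * F₁ * T⁻¹
      have h : O₂⁻¹ * (O₁ * F₁ * C₁) * C₂⁻¹ = O₂⁻¹ * (O₂ * F₂ * C₂) * C₂⁻¹ := by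
        rw [hOFC]
      calc F₂ = O₂⁻¹ * (O₂ * F₂ * C₂) * C₂⁻¹ := by
            rw [show O₂⁻¹ * (O₂ * F₂ * C₂) * C₂⁻¹
                = (O₂⁻¹ * O₂) * F₂ * (C₂ * C₂⁻¹) by noncomm_ring,
              hO₂inv', hC₂inv, one_mul, mul_one]
        _ = O₂⁻¹ * (O₁ * F₁ * C₁) * C₂⁻¹ := h.symm
        _ = T * F₁ * T⁻¹ := by
            rw [hTinv, hTdef]
            noncomm_ring
    · -- N₂ = T * N₁
      ext i j
      have hj : j = 0 := Subsingleton.elim _ _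
      subst hj
      have h := congrFun (congrFun hTC i) ⟨0, hn⟩
      have hC2 : C₂ i ⟨0, hn⟩ = N₂ i 0 := by simp [hC₂def]
      rw [hC2, Matrix.mul_apply] at h
      rw [Matrix.mul_apply, ← h]
      exact Finset.sum_congr rfl fun k _ => by simp [hC₁def]
    · -- H₂ = H₁ * T⁻¹
      have hO₂eq : O₂ = O₁ * T⁻¹ := by
        rw [← hO₂T, mul_assoc, hTinvT, mul_one]
      ext i j
      have hi : i = 0 := Subsingleton.elim _ _
      subst hi
      have h := congrFun (congrFun hO₂eq ⟨0, hn⟩) j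
      have hO2 : O₂ ⟨0, hn⟩ j = H₂ 0 j := by simp [hO₂def]
      rw [hO2, Matrix.mul_apply] at h
      rw [Matrix.mul_apply, h]
      exact Finset.sum_congr rfl fun k _ => by simp [hO₁def]
  · rintro ⟨T, hT, hF, hN, hH⟩ k hk
    have hTd : IsUnit T.det := (Matrix.isUnit_iff_isUnit_det _).mp hT
    have hTi : T⁻¹ * T = 1 := Matrix.nonsing_inv_mul _ hTd
    have cancel : ∀ (m : ℕ) (X : Matrix (Fin n) (Fin m) ℝ), T⁻¹ * (T * X) = X := by
      intro m X
      rw [← Matrix.mul_assoc, hTi, Matrix.one_mul]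
    have hpow : ∀ m : ℕ, F₂ ^ m = T * F₁ ^ m * T⁻¹ := by
      intro m
      induction m with
      | zero => simp [Matrix.mul_nonsing_inv _ hTd]
      | succ m ih =>
        rw [pow_succ, ih, hF, pow_succ]
        calc T * F₁ ^ m * T⁻¹ * (T * F₁ * T⁻¹)
            = T * F₁ ^ m * (T⁻¹ * T) * F₁ * T⁻¹ := by noncomm_ring
          _ = T * (F₁ ^ m * F₁) * T⁻¹ := by rw [hTi]; noncomm_ring
    have hM : H₁ * T⁻¹ * (T * F₁ ^ (k - 1) * T⁻¹) * (T * N₁)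
        = H₁ * F₁ ^ (k - 1) * N₁ := by
      simp only [Matrix.mul_assoc, cancel]
    rw [hH, hN, hpow, hM]
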